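/- Fix a positive integer k, natural numbers d_1, …, d_k, and FS^op-modules N_1, …, N_k such that N_i is d_i-small for each i, and set d = d_1 + ⋯ + d_k. Then the FS^op-module N defined by N(E) := ⊕_{f: E ↠ [k]} N_1(f⁻¹(1)) ⊗ ⋯ ⊗ N_k(f⁻¹(k)), where for a surjection g: E ↠ F the structure map N(F) → N(E) sends the summand indexed by f: F ↠ [k] to the summand indexed by f∘g via the tensor product of the structure maps of the N_i induced by the restricted surjections g: (f∘g)⁻¹(i) ↠ f⁻¹(i), is d-small. -/

import Mathlib

open CategoryTheory

/-- An object of the category `FS`: a nonempty finite set. -/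
structure FSObj : Type 1 where
  carrier : Type
  [fintype : Fintype carrier]
  [nonempty : Nonempty carrier]

attribute [instance] FSObj.fintype FSObj.nonempty

instance : CoeSort FSObj Type := ⟨FSObj.carrier⟩

/-- The category `FS` of nonempty finite sets with surjective maps. -/
instance : Category FSObj where
  Hom A B := {f : A → B // Function.Surjective f}
  id A := ⟨id, Function.surjective_id⟩
  comp f g := ⟨g.1 ∘ f.1, g.2.comp f.2⟩

/-- The standard object `[n] = {1, …, n}` of `FS`, modeled as `Fin n`, for `n ≥ 1`. -/
def FSn (n : ℕ) [NeZero n] : FSObj := ⟨Fin n⟩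

/-- An `FSᵒᵖ`-module: a contravariant functor from `FS` to complex vector spaces. -/
abbrev FSopModule : Type 1 := FSObjᵒᵖ ⥤ ModuleCat.{0} ℂ

/-- The value `N(n) := N([n])` of an `FSᵒᵖ`-module at `[n]`, as a representation of
the symmetric group `S_n = Aut([n])`. -/
def FSopModule.val (N : FSopModule) (n : ℕ) [NeZero n] : ModuleCat ℂ :=
  N.obj (Opposite.op (FSn n))

/-- The dimension of `N([n])`, with the junk value `0` when `n = 0`. -/
noncomputable def FSopModule.dim (N : FSopModule) : ℕ → ℕ
  | 0 => 0
  | (n + 1) => Module.finrank ℂ (N.val (n + 1))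

/-- The principal projective `FSᵒᵖ`-module at an object `A`, sending a finite set `E` to
the complex vector space with basis the set of surjections `E ↠ A`.  The principal
projective `P_m` of the paper is `PP (FSn m)`. -/
@[simps]
noncomputable def PP (A : FSObj) : FSopModule where
  obj E := ModuleCat.of ℂ ((E.unop ⟶ A) →₀ ℂ)
  map {E E'} g := ModuleCat.ofHom (Finsupp.lmapDomain ℂ ℂ (fun f => g.unop ≫ f))
  map_id _ := ModuleCat.hom_ext (LinearMap.ext fun _ => Finsupp.mapDomain_id)
  map_comp g h := ModuleCat.hom_ext <| LinearMap.ext fun _ =>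
    (Finsupp.mapDomain_comp (f := fun f => g.unop ≫ f) (g := fun f => h.unop ≫ f))

/-- The object `[m]` together with a positivity proof. -/
def finObj (m : ℕ) (h : 1 ≤ m) : FSObj :=
  { carrier := Fin m, nonempty := ⟨⟨0, h⟩⟩ }

/-- An `FSᵒᵖ`-module is finitely generated in degrees `≤ d` if it is the quotient of a
finite direct sum of principal projectives `P_m` with `m ≤ d`; equivalently, if there is
a finite family of maps from such principal projectives whose images jointly span. -/
def FinGenLE (d : ℕ) (N : FSopModule) : Prop :=
  ∃ (k : ℕ) (m : Fin k → ℕ) (hm : ∀ i, 1 ≤ m i ∧ m i ≤ d)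
    (T : ∀ i : Fin k, PP (finObj (m i) (hm i).1) ⟶ N),
    ∀ E : FSObjᵒᵖ, (⨆ i : Fin k, LinearMap.range ((T i).app E).hom) = ⊤

/-- An `FSᵒᵖ`-module is `d`-small if it is a subquotient of an `FSᵒᵖ`-module that is
finitely generated in degrees `≤ d`. -/
def IsSmall (d : ℕ) (N : FSopModule) : Prop :=
  ∃ (M M₀ : FSopModule) (_ : FinGenLE d M) (ι : M₀ ⟶ M) (π : M₀ ⟶ N),
    (∀ E : FSObjᵒᵖ, Function.Injective (ι.app E)) ∧
    (∀ E : FSObjᵒᵖ, Function.Surjective (π.app E))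
open CategoryTheory
open scoped TensorProduct

/-- The fiber `f⁻¹(a)` of a surjection `f : E ↠ A` in `FS`, as an object of `FS`. -/
noncomputable def fiberObj {E A : FSObj} (f : E ⟶ A) (a : A) : FSObj where
  carrier := {e : E // f.1 e = a}
  fintype := Fintype.ofFinite _
  nonempty := let ⟨e, he⟩ := f.2 a; ⟨⟨e, he⟩⟩

/-- The restriction of a surjection `g : E' ↠ E` to a surjection of fibers
`(g ≫ f)⁻¹(a) ↠ f⁻¹(a)`. -/
def fiberHom {E' E A : FSObj} (g : E' ⟶ E) (f : E ⟶ A) (a : A) :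
    fiberObj (g ≫ f) a ⟶ fiberObj f a :=
  ⟨fun e => ⟨g.1 e.1, e.2⟩, by
    rintro ⟨x, hx⟩
    obtain ⟨e, rfl⟩ := g.2 x
    exact ⟨⟨e, hx⟩, rfl⟩⟩

noncomputable instance (A B : FSObj) : DecidableEq (A ⟶ B) := Classical.decEq _

variable {k : ℕ} [NeZero k]

/-- The underlying space `⊕_{f : E ↠ [k]} N₁(f⁻¹(1)) ⊗ ⋯ ⊗ N_k(f⁻¹(k))` of the tensor
construction. -/
noncomputable abbrev tensorConstrObj (Ns : Fin k → FSopModule) (E : FSObj) : Type :=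
  DirectSum (E ⟶ FSn k) fun f => ⨂[ℂ] (i : Fin k), ((Ns i).obj (Opposite.op (fiberObj f i)))

/-- The structure map of the tensor construction along a surjection `g : E' ↠ E`:
it sends the summand indexed by `f : E ↠ [k]` to the summand indexed by
`f ∘ g = g ≫ f` via the tensor product of the structure maps of the `Nᵢ` induced by the
restricted surjections `(g ≫ f)⁻¹(i) ↠ f⁻¹(i)`. -/
noncomputable def tensorConstrMap (Ns : Fin k → FSopModule) {E' E : FSObj} (g : E' ⟶ E) :
    tensorConstrObj Ns E →ₗ[ℂ] tensorConstrObj Ns E' :=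
  DirectSum.toModule ℂ _ _ fun f =>
    (DirectSum.lof ℂ _ _ (g ≫ f)).comp
      (PiTensorProduct.map fun i => (((Ns i).map ((fiberHom g f i).op)).hom : _ →ₗ[ℂ] _))

lemma tensorConstrMap_lof_tprod (Ns : Fin k → FSopModule) {E' E : FSObj} (g : E' ⟶ E)
    (f : E ⟶ FSn k) (x : ∀ i : Fin k, ((Ns i).obj (Opposite.op (fiberObj f i)))) :
    tensorConstrMap Ns g (DirectSum.lof ℂ _
        (fun f => ⨂[ℂ] (i : Fin k), ((Ns i).obj (Opposite.op (fiberObj f i)))) f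
        (PiTensorProduct.tprod ℂ x)) =
      DirectSum.lof ℂ _
        (fun f => ⨂[ℂ] (i : Fin k), ((Ns i).obj (Opposite.op (fiberObj f i)))) (g ≫ f)
        (PiTensorProduct.tprod ℂ
          (fun i => (((Ns i).map ((fiberHom g f i).op)).hom : _ →ₗ[ℂ] _) (x i))) := by
  simp [tensorConstrMap, DirectSum.toModule_lof, PiTensorProduct.map_tprod]

/-- The tensor construction: the `FSᵒᵖ`-module
`N(E) := ⊕_{f : E ↠ [k]} N₁(f⁻¹(1)) ⊗ ⋯ ⊗ N_k(f⁻¹(k))`. -/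
noncomputable def tensorConstr (Ns : Fin k → FSopModule) : FSopModule where
  obj E := ModuleCat.of ℂ (tensorConstrObj Ns E.unop)
  map {E E'} φ := ModuleCat.ofHom (tensorConstrMap Ns φ.unop)
  map_id E := by
    refine ModuleCat.hom_ext (DirectSum.linearMap_ext _ fun f => PiTensorProduct.ext (MultilinearMap.ext fun x => ?_))
    refine (tensorConstrMap_lof_tprod Ns (𝟙 E.unop) f x).trans ?_
    exact congrArg (DirectSum.lof ℂ (E.unop ⟶ FSn k)
        (fun f => ⨂[ℂ] (i : Fin k), ((Ns i).obj (Opposite.op (fiberObj f i)))) f)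
      (congrArg (PiTensorProduct.tprod ℂ)
        (funext fun i => LinearMap.congr_fun
          (congrArg ModuleCat.Hom.hom ((Ns i).map_id (Opposite.op (fiberObj f i)))) (x i)))
  map_comp {E E' E''} φ ψ := by
    refine ModuleCat.hom_ext (DirectSum.linearMap_ext _ fun f => PiTensorProduct.ext (MultilinearMap.ext fun x => ?_))
    refine (tensorConstrMap_lof_tprod Ns (ψ.unop ≫ φ.unop) f x).trans ?_
    refine Eq.trans ?_
      ((congrArg (tensorConstrMap Ns ψ.unop) (tensorConstrMap_lof_tprod Ns φ.unop f x)).symm)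
    refine Eq.trans ?_ ((tensorConstrMap_lof_tprod Ns ψ.unop (φ.unop ≫ f) _).symm)
    exact congrArg (DirectSum.lof ℂ (E''.unop ⟶ FSn k)
        (fun f => ⨂[ℂ] (i : Fin k), ((Ns i).obj (Opposite.op (fiberObj f i))))
        (ψ.unop ≫ φ.unop ≫ f))
      (congrArg (PiTensorProduct.tprod ℂ)
        (funext fun i => LinearMap.congr_fun
          (congrArg ModuleCat.Hom.hom ((Ns i).map_comp ((fiberHom φ.unop f i).op)
            ((fiberHom ψ.unop (φ.unop ≫ f) i).op) : _)) (x i)))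

/-!
Over `ℂ` every injection has a left inverse and every surjection a right inverse, so
direct sums and tensor products of injective (surjective) linear maps are injective
(surjective). Hence the construction `(Nᵢ)ᵢ ↦ N` is functorial in the factors and carries
subquotient presentations `Nᵢ ↞ M₀ᵢ ↪ Mᵢ` to one of `N`; it remains to see that it preserves
finite generation. A surjection `h : E ↠ ⊔ᵢ Bᵢ` is the same as a surjection `f : E ↠ [k]`
together with surjections `f⁻¹(i) ↠ Bᵢ`, so `h ↦ ⊗ᵢ h|_{f⁻¹(i)}` maps `P_{⊔ᵢ Bᵢ}` onto
`⊕_f ⨂ᵢ P_{Bᵢ}(f⁻¹(i))`. If the `T_{ij} : P_{m_{ij}} ⟶ Mᵢ` generate `Mᵢ`, composing this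
map (with `Bᵢ = [m_{i,pᵢ}]`) with `⊗ᵢ T_{i,pᵢ}` for every choice `p` of one generator per
factor yields generators of `N` out of `P_{∑ᵢ m_{i,pᵢ}}`.
-/

open Opposite

theorem PiTensorProduct.map_injective {K ι : Type*} [Field K] {M N : ι → Type*}
    [∀ i, AddCommGroup (M i)] [∀ i, Module K (M i)] [∀ i, AddCommGroup (N i)]
    [∀ i, Module K (N i)] {f : ∀ i, M i →ₗ[K] N i} (hf : ∀ i, Function.Injective (f i)) :
    Function.Injective (PiTensorProduct.map f) := by
  choose g hg using fun i => (f i).exists_leftInverse_of_injective (LinearMap.ker_eq_bot.2 (hf i))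
  have hgf : PiTensorProduct.map g ∘ₗ PiTensorProduct.map f = .id := by
    rw [← PiTensorProduct.map_comp, funext hg, PiTensorProduct.map_id]
  exact Function.LeftInverse.injective (LinearMap.congr_fun hgf)

theorem PiTensorProduct.map_surjective {R ι : Type*} [CommSemiring R] {M N : ι → Type*}
    [∀ i, AddCommMonoid (M i)] [∀ i, Module R (M i)] [∀ i, AddCommMonoid (N i)]
    [∀ i, Module R (N i)] {f : ∀ i, M i →ₗ[R] N i} (hf : ∀ i, Function.Surjective (f i)) :
    Function.Surjective (PiTensorProduct.map f) := by
  rw [← LinearMap.range_eq_top, PiTensorProduct.map_range_eq_span_tprod, eq_top_iff,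
    ← PiTensorProduct.span_tprod_eq_top]
  refine Submodule.span_mono ?_
  rintro _ ⟨x, rfl⟩
  choose y hy using fun i => hf i (x i)
  exact ⟨y, by simp only [hy]⟩

def FSObj.isoOfEquiv {A B : FSObj} (e : A ≃ B) : A ≅ B where
  hom := ⟨e, e.surjective⟩
  inv := ⟨e.symm, e.symm.surjective⟩
  hom_inv_id := Subtype.ext (funext e.symm_apply_apply)
  inv_hom_id := Subtype.ext (funext e.apply_symm_apply)

def FSObj.sigma (B : Fin k → FSObj) : FSObj where
  carrier := Σ i, B i
  nonempty := ⟨⟨0, Classical.arbitrary _⟩⟩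

def FSObj.sigmaFst (B : Fin k → FSObj) : FSObj.sigma B ⟶ FSn k :=
  ⟨Sigma.fst, fun i => ⟨(⟨i, Classical.arbitrary _⟩ : Σ i, B i), rfl⟩⟩

noncomputable def FSObj.fiberSigmaFstIso (B : Fin k → FSObj) (i : Fin k) :
    fiberObj (FSObj.sigmaFst B) i ≅ B i :=
  FSObj.isoOfEquiv (Equiv.sigmaSubtype (β := fun i => B i) i)

theorem val_apply_fiber_eq {E A B : FSObj} {f : E ⟶ B} {π : A ⟶ B}
    (J : ∀ b, fiberObj f b ⟶ fiberObj π b) {b : B} (x : fiberObj f b) :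
    ((J b).1 x).1 = ((J (f.1 x.1)).1 ⟨x.1, rfl⟩).1 := by
  obtain ⟨x, rfl⟩ := x
  rfl

def glueFibers {E A B : FSObj} {π : A ⟶ B} (f : E ⟶ B) (J : ∀ b, fiberObj f b ⟶ fiberObj π b) :
    E ⟶ A :=
  ⟨fun x => ((J (f.1 x)).1 ⟨x, rfl⟩).1, fun a => by
    obtain ⟨x, hx⟩ := (J (π.1 a)).2 ⟨a, rfl⟩
    exact ⟨x.1, (val_apply_fiber_eq J x).symm.trans (congrArg Subtype.val hx)⟩⟩

theorem glueFibers_comp {E A B : FSObj} {π : A ⟶ B} (f : E ⟶ B)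
    (J : ∀ b, fiberObj f b ⟶ fiberObj π b) : glueFibers f J ≫ π = f :=
  Subtype.ext <| funext fun x => ((J (f.1 x)).1 ⟨x, rfl⟩).2

noncomputable def PP.postcomp {A B : FSObj} (u : A ⟶ B) : PP A ⟶ PP B where
  app E := ModuleCat.ofHom (Finsupp.lmapDomain ℂ ℂ fun f : E.unop ⟶ A => f ≫ u)
  naturality _ _ φ := ModuleCat.hom_ext <| Finsupp.lhom_ext fun f c => by
    change Finsupp.mapDomain _ (Finsupp.mapDomain _ (Finsupp.single f c)) =
      Finsupp.mapDomain _ (Finsupp.mapDomain _ (Finsupp.single f c))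
    simp only [Finsupp.mapDomain_single, Category.assoc]

theorem PP.postcomp_app_surjective {A B : FSObj} (u : A ⟶ B) [IsSplitEpi u] (E : FSObjᵒᵖ) :
    Function.Surjective ((PP.postcomp u).app E) := by
  intro (y : (E.unop ⟶ B) →₀ ℂ)
  refine ⟨Finsupp.mapDomain (fun f : E.unop ⟶ B => f ≫ section_ u) y, ?_⟩
  change Finsupp.mapDomain _ (Finsupp.mapDomain _ y) = y
  rw [← Finsupp.mapDomain_comp]
  convert Finsupp.mapDomain_id
  ext f : 1
  simp

theorem range_app_comp_of_surjective {M N P : FSopModule} (α : M ⟶ N) (β : N ⟶ P)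
    (E : FSObjᵒᵖ) (hα : Function.Surjective (α.app E)) :
    LinearMap.range ((α ≫ β).app E).hom = LinearMap.range (β.app E).hom := by
  rw [NatTrans.comp_app, ModuleCat.hom_comp, LinearMap.range_comp,
    LinearMap.range_eq_top.2 hα, Submodule.map_top]

theorem finGenLE_of_iSup_range_eq_top {d : ℕ} {N : FSopModule} {ι : Type} [Finite ι]
    (A : ι → FSObj) (hA : ∀ c, Fintype.card (A c) ≤ d) (T : ∀ c, PP (A c) ⟶ N)
    (hT : ∀ E, ⨆ c, LinearMap.range ((T c).app E).hom = ⊤) : FinGenLE d N := by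
  obtain ⟨n, ⟨e⟩⟩ := Finite.exists_equiv_fin ι
  let u c : finObj (Fintype.card (A c)) Fintype.card_pos ≅ A c :=
    FSObj.isoOfEquiv (Fintype.equivFin (A c)).symm
  refine ⟨n, fun j => Fintype.card (A (e.symm j)), fun j => ⟨Fintype.card_pos, hA _⟩,
    fun j => PP.postcomp (u _).hom ≫ T (e.symm j), fun E => ?_⟩
  simp_rw [range_app_comp_of_surjective _ _ E (PP.postcomp_app_surjective _ E)]
  rw [e.symm.iSup_comp (g := fun c => LinearMap.range ((T c).app E).hom)]
  exact hT E

section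

variable {Ms Ns : Fin k → FSopModule}

section Functoriality

variable (α : ∀ i, Ms i ⟶ Ns i)

noncomputable def tensorConstrObjMap (E : FSObj) :
    tensorConstrObj Ms E →ₗ[ℂ] tensorConstrObj Ns E :=
  DirectSum.lmap fun f => PiTensorProduct.map fun i => ((α i).app (op (fiberObj f i))).hom

theorem tensorConstrObjMap_lof_tprod {E : FSObj} (f : E ⟶ FSn k)
    (x : ∀ i, (Ms i).obj (op (fiberObj f i))) :
    tensorConstrObjMap α E (DirectSum.lof ℂ _ _ f (PiTensorProduct.tprod ℂ x)) =
      DirectSum.lof ℂ _ _ f (PiTensorProduct.tprod ℂ fun i => (α i).app _ (x i)) := by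
  simp only [tensorConstrObjMap, DirectSum.lmap_lof, PiTensorProduct.map_tprod]

noncomputable def tensorConstrNatTrans : tensorConstr Ms ⟶ tensorConstr Ns where
  app E := ModuleCat.ofHom (tensorConstrObjMap α E.unop)
  naturality _ _ φ := by
    refine ModuleCat.hom_ext <| DirectSum.linearMap_ext _ fun f =>
      PiTensorProduct.ext <| MultilinearMap.ext fun x => ?_
    change tensorConstrObjMap α _ (tensorConstrMap Ms φ.unop
        (DirectSum.lof ℂ _ _ f (PiTensorProduct.tprod ℂ x))) =
      tensorConstrMap Ns φ.unop (tensorConstrObjMap α _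
        (DirectSum.lof ℂ _ _ f (PiTensorProduct.tprod ℂ x)))
    rw [tensorConstrMap_lof_tprod, tensorConstrObjMap_lof_tprod, tensorConstrObjMap_lof_tprod,
      tensorConstrMap_lof_tprod]
    congr 2
    funext i
    exact ConcreteCategory.congr_hom ((α i).naturality (fiberHom φ.unop f i).op) (x i)

theorem tensorConstrNatTrans_app_injective (hα : ∀ i X, Function.Injective ((α i).app X))
    (E : FSObjᵒᵖ) : Function.Injective ((tensorConstrNatTrans α).app E) :=
  (DirectSum.lmap_injective _).2 fun _ => PiTensorProduct.map_injective fun i => hα i _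

theorem tensorConstrNatTrans_app_surjective (hα : ∀ i X, Function.Surjective ((α i).app X))
    (E : FSObjᵒᵖ) : Function.Surjective ((tensorConstrNatTrans α).app E) :=
  (DirectSum.lmap_surjective _).2 fun _ => PiTensorProduct.map_surjective fun i => hα i _

end Functoriality

theorem tensorConstrObj_submodule_eq_top {E : FSObj} {γ : (E ⟶ FSn k) → Fin k → Type*}
    (g : ∀ f i, γ f i → (Ns i).obj (op (fiberObj f i)))
    (hg : ∀ f i, Submodule.span ℂ (Set.range (g f i)) = ⊤)
    {S : Submodule ℂ ((tensorConstr Ns).obj (op E))}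
    (hS : ∀ f (J : ∀ i, γ f i), DirectSum.lof ℂ _ _ f (⨂ₜ[ℂ] i, g f i (J i)) ∈ S) :
    S = ⊤ := by
  have hsummand : ∀ f, S.comap (DirectSum.lof ℂ _ _ f) = ⊤ := fun f => by
    rw [eq_top_iff, ← PiTensorProduct.submodule_span_eq_top (g := fun i => g f i) (hg f),
      Submodule.span_le]
    rintro _ ⟨J, rfl⟩
    exact hS f J
  rw [eq_top_iff]
  rintro v -
  induction v using DirectSum.induction_on with
  | zero => exact zero_mem S
  | of f t => exact (hsummand f).ge (Submodule.mem_top (x := t))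
  | add v w hv hw => exact add_mem hv hw

theorem iSup_range_tensorConstrNatTrans_app_eq_top {γ : Fin k → Type*}
    {Ps : ∀ i, γ i → FSopModule} (T : ∀ i j, Ps i j ⟶ Ms i)
    (hT : ∀ i X, ⨆ j, LinearMap.range ((T i j).app X).hom = ⊤) (E : FSObjᵒᵖ) :
    ⨆ p : ∀ i, γ i, LinearMap.range ((tensorConstrNatTrans fun i => T i (p i)).app E).hom = ⊤ := by
  refine tensorConstrObj_submodule_eq_top (Ns := Ms) (E := E.unop)
    (γ := fun f i => ↥(⋃ j, (LinearMap.range ((T i j).app (op (fiberObj f i))).hom : Set _)))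
    (fun _ _ => Subtype.val) (fun f i => ?_) (fun f J => ?_)
  · rw [Subtype.range_coe, Submodule.span_iUnion]
    simpa only [Submodule.span_eq] using hT i _
  · choose p z hz using fun i => Set.mem_iUnion.1 (J i).2
    apply Submodule.mem_iSup_of_mem (M := (tensorConstr Ms).obj E) p
    refine ⟨(DirectSum.lof ℂ _ _ f (⨂ₜ[ℂ] i, z i) :
      tensorConstrObj (fun i => Ps i (p i)) E.unop), ?_⟩
    exact (tensorConstrObjMap_lof_tprod _ f z).trans (by simp only [hz])

section Comparison

variable {A : FSObj} (π : A ⟶ FSn k)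

noncomputable def PP.toTensorConstrFibers : PP A ⟶ tensorConstr fun i => PP (fiberObj π i) where
  app E := ModuleCat.ofHom <| Finsupp.linearCombination ℂ fun h : E.unop ⟶ A =>
    (DirectSum.lof ℂ _ _ (h ≫ π) (⨂ₜ[ℂ] i, Finsupp.single (fiberHom h π i) 1) :
      tensorConstrObj (fun i => PP (fiberObj π i)) E.unop)
  naturality _ _ φ := by
    refine ModuleCat.hom_ext <| Finsupp.lhom_ext fun h c => ?_
    change Finsupp.linearCombination ℂ _ (Finsupp.mapDomain _ (Finsupp.single h c)) =
      tensorConstrMap _ φ.unop (Finsupp.linearCombination ℂ _ (Finsupp.single h c))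
    rw [Finsupp.mapDomain_single, Finsupp.linearCombination_single,
      Finsupp.linearCombination_single, map_smul]
    erw [tensorConstrMap_lof_tprod]
    congr 3
    funext i
    change _ = Finsupp.mapDomain (fun g => fiberHom φ.unop (h ≫ π) i ≫ g)
      (Finsupp.single (fiberHom h π i) 1)
    rw [Finsupp.mapDomain_single]
    rfl

theorem PP.toTensorConstrFibers_app_single {E : FSObj} (h : E ⟶ A) (f : E ⟶ FSn k)
    (hf : h ≫ π = f) (J : ∀ i, fiberObj f i ⟶ fiberObj π i)
    (hJ : ∀ i x, ((J i).1 x).1 = h.1 x.1) :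
    (PP.toTensorConstrFibers π).app (op E) (Finsupp.single h 1) =
      (DirectSum.lof ℂ _ _ f (⨂ₜ[ℂ] i, Finsupp.single (J i) 1) :
        tensorConstrObj (fun i => PP (fiberObj π i)) E) := by
  subst hf
  have hJ' : J = fiberHom h π := funext fun i => Subtype.ext <| funext fun x =>
    Subtype.ext (hJ i x)
  subst hJ'
  exact (Finsupp.linearCombination_single (M := tensorConstrObj _ E) ℂ _ _).trans (one_smul ℂ _)

theorem PP.toTensorConstrFibers_app_surjective (E : FSObjᵒᵖ) :
    Function.Surjective ((PP.toTensorConstrFibers π).app E) := by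
  refine LinearMap.range_eq_top.1 <| tensorConstrObj_submodule_eq_top (E := E.unop)
    (γ := fun f i => fiberObj f i ⟶ fiberObj π i) (fun _ _ u => Finsupp.single u 1)
    (fun _ _ => Finsupp.basisSingleOne.span_eq) fun f J => ?_
  exact ⟨Finsupp.single (glueFibers f J) 1, PP.toTensorConstrFibers_app_single π _ f
    (glueFibers_comp f J) J fun _ x => val_apply_fiber_eq J x⟩

end Comparison

theorem finGenLE_tensorConstr {ds : Fin k → ℕ} (h : ∀ i, FinGenLE (ds i) (Ms i)) :
    FinGenLE (∑ i, ds i) (tensorConstr Ms) := by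
  choose n m hm T hT using h
  let B (p : ∀ i, Fin (n i)) (i : Fin k) := finObj (m i (p i)) (hm i (p i)).1
  refine finGenLE_of_iSup_range_eq_top (fun p => FSObj.sigma (B p)) (fun p => ?_)
    (fun p => PP.toTensorConstrFibers (FSObj.sigmaFst (B p)) ≫
      tensorConstrNatTrans (fun i => PP.postcomp (FSObj.fiberSigmaFstIso (B p) i).hom) ≫
      tensorConstrNatTrans fun i => T i (p i)) fun E => ?_
  · change Fintype.card (Σ i, Fin (m i (p i))) ≤ _
    rw [Fintype.card_sigma]
    exact Finset.sum_le_sum fun i _ => (Fintype.card_fin _).trans_le (hm i (p i)).2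
  · have hθ p := PP.toTensorConstrFibers_app_surjective (FSObj.sigmaFst (B p)) E
    have hiso p := tensorConstrNatTrans_app_surjective
      (fun i => PP.postcomp (FSObj.fiberSigmaFstIso (B p) i).hom)
      (fun _ => PP.postcomp_app_surjective _) E
    simp_rw [range_app_comp_of_surjective _ _ E (hθ _),
      range_app_comp_of_surjective _ _ E (hiso _)]
    exact iSup_range_tensorConstrNatTrans_app_eq_top T hT E

end

/-- if `Nᵢ` is a `dᵢ`-small `FSᵒᵖ`-module for `1 ≤ i ≤ k` and
`d = d₁ + ⋯ + d_k`, then the `FSᵒᵖ`-module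
`N(E) = ⊕_{f : E ↠ [k]} N₁(f⁻¹(1)) ⊗ ⋯ ⊗ N_k(f⁻¹(k))` is `d`-small. -/
theorem isSmall_tensorConstr (ds : Fin k → ℕ) (Ns : Fin k → FSopModule)
    (hsmall : ∀ i, IsSmall (ds i) (Ns i)) :
    IsSmall (∑ i, ds i) (tensorConstr Ns) := by
  choose M M₀ hM ι π hι hπ using hsmall
  exact ⟨tensorConstr M, tensorConstr M₀, finGenLE_tensorConstr hM, tensorConstrNatTrans ι,
    tensorConstrNatTrans π, tensorConstrNatTrans_app_injective ι hι,
    tensorConstrNatTrans_app_surjective π hπ⟩
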